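/- Let Λ be an ℝ-linear map on n×n complex matrices sending Hermitian matrices to Hermitian matrices, and let Λ* be a trace adjoint of Λ. Let ρ, σ be positive definite matrices such that Λ(ρ) and Λ(σ) are positive definite. Let D̃₂ denote the sandwiched Rényi relative entropy with α = 2, i.e., D̃₂(ρ,σ) = log(tr[(σ^{−1/4}·ρ·σ^{−1/4})²]). Suppose that for all Hermitian M₁, M₂ in some neighborhood of 0 the matrices ρ+M₁, σ+M₂, Λ(ρ+M₁), Λ(σ+M₂) are positive definite and D̃₂(ρ+M₁, σ+M₂) ≥ D̃₂(Λ(ρ+M₁), Λ(σ+M₂)), and that D̃₂(ρ,σ) = D̃₂(Λ(ρ),Λ(σ)). Then the Petz map recovers ρ: σ^{1/2}·Λ*(Λ(σ)^{−1/2}·Λ(ρ)·Λ(σ)^{−1/2})·σ^{1/2} = ρ. -/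

import Mathlib

/-!
Write `Q(ρ, σ) = tr[(σ^{-1/4} ρ σ^{-1/4})²]`, so that `D̃₂ = log Q`. For Hermitian `M`, both
`Q(ρ + tM, σ)` and `Q(Λ(ρ + tM), Λσ)` are quadratic polynomials in `t`, with linear coefficients
`2 Re tr(σ^{-1/2} ρ σ^{-1/2} M)` and, moving `Λ` across the trace, `2 Re tr(Λ*(Z) M)` where
`Z = Λ(σ)^{-1/2} Λ(ρ) Λ(σ)^{-1/2}`. Data processing near `ρ` and its saturation at `ρ` make the
difference of the two polynomials nonnegative near `t = 0` and zero at `t = 0`, so the linear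
coefficients agree. Thus the Hermitian matrix `D = σ^{-1/2} ρ σ^{-1/2} - Λ*(Z)` is orthogonal to
every Hermitian matrix in the Hilbert–Schmidt pairing, in particular to itself, so `D = 0`;
conjugating by `σ^{1/2}` gives the Petz recovery identity.
-/

open Matrix
open scoped ComplexOrder

attribute [local instance] Matrix.frobeniusNormedAddCommGroup Matrix.frobeniusNormedSpace

/-- The real power `A^t` of a Hermitian matrix, via the continuous functional calculus. -/
noncomputable def matPow {n : Type*} [Fintype n] [DecidableEq n]
    (A : Matrix n n ℂ) (t : ℝ) : Matrix n n ℂ :=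
  cfc (fun x : ℝ => x ^ t) A

/-- The sandwiched Rényi relative entropy with `α = 2`:
`D̃₂(ρ,σ) = log tr[(σ^{−1/4} ρ σ^{−1/4})²]`. -/
noncomputable def sandwichedRenyiTwo {n : Type*} [Fintype n] [DecidableEq n]
    (ρ σ : Matrix n n ℂ) : ℝ :=
  Real.log ((((matPow σ (-(1/4)) * ρ * matPow σ (-(1/4))) ^ 2).trace).re)

open Topology ComplexStarModule

section Trace

variable {n : Type*} [Fintype n]

theorem Matrix.ext_of_forall_isHermitian_trace_mul {X Y : Matrix n n ℂ}
    (h : ∀ M : Matrix n n ℂ, M.IsHermitian → (X * M).trace = (Y * M).trace) : X = Y := by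
  refine ext_iff_trace_mul_right.mpr fun A => ?_
  rw [← realPart_add_I_smul_imaginaryPart A]
  simp only [Matrix.mul_add, mul_smul_comm, trace_add, trace_smul, h _ (ℜ A).2, h _ (ℑ A).2]

theorem Matrix.IsHermitian.conj {S A : Matrix n n ℂ} (hS : S.IsHermitian) (hA : A.IsHermitian) :
    (S * A * S).IsHermitian := by
  simpa only [hS.eq] using isHermitian_conjTranspose_mul_mul S hA

theorem Matrix.IsHermitian.re_trace_mul_self_eq_zero_iff {H : Matrix n n ℂ} (hH : H.IsHermitian) :
    (H * H).trace.re = 0 ↔ H = 0 := by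
  have hnonneg := Complex.nonneg_iff.mp (posSemidef_conjTranspose_mul_self H).trace_nonneg
  rw [← trace_conjTranspose_mul_self_eq_zero_iff, hH.eq, Complex.ext_iff]
  rw [hH.eq] at hnonneg
  simp [← hnonneg.2]

theorem Matrix.IsHermitian.re_trace_mul_self_pos {H : Matrix n n ℂ} (hH : H.IsHermitian)
    (h : H ≠ 0) : 0 < (H * H).trace.re := by
  have hnonneg := Complex.nonneg_iff.mp (posSemidef_conjTranspose_mul_self H).trace_nonneg
  rw [hH.eq] at hnonneg
  exact lt_of_le_of_ne hnonneg.1 (Ne.symm (mt hH.re_trace_mul_self_eq_zero_iff.mp h))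

theorem trace_conj_mul_conj (S A B : Matrix n n ℂ) :
    ((S * A * S) * (S * B * S)).trace = ((S * S) * A * (S * S) * B).trace := by
  rw [show (S * A * S) * (S * B * S) = (S * A * S * S * B) * S by noncomm_ring,
    trace_mul_comm, show S * (S * A * S * S * B) = (S * S) * A * (S * S) * B by noncomm_ring]

theorem isHermitian_trace_adjoint_apply {Λ Λstar : Matrix n n ℂ → Matrix n n ℂ}
    (hΛherm : ∀ A : Matrix n n ℂ, A.IsHermitian → (Λ A).IsHermitian)
    (hadj : ∀ A B : Matrix n n ℂ, (Λstar A * B).trace = (A * Λ B).trace)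
    {A : Matrix n n ℂ} (hA : A.IsHermitian) : (Λstar A).IsHermitian := by
  refine ext_of_forall_isHermitian_trace_mul fun M hM => ?_
  calc ((Λstar A)ᴴ * M).trace = star ((Λstar A * M).trace) := by
        rw [← trace_conjTranspose, conjTranspose_mul, hM.eq, trace_mul_comm]
    _ = (Λstar A * M).trace := by
        rw [hadj, ← trace_conjTranspose, conjTranspose_mul, hA.eq, (hΛherm M hM).eq,
          trace_mul_comm]

end Trace

theorem eq_zero_of_isLocalMin_mul_add_mul_sq {a b : ℝ}
    (h : IsLocalMin (fun t : ℝ => a * t + b * t ^ 2) 0) : a = 0 := by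
  simpa using h.hasDerivAt_eq_zero (((hasDerivAt_id (0 : ℝ)).const_mul a).add
    ((hasDerivAt_pow 2 (0 : ℝ)).const_mul b))

section MatPow

variable {n : Type*} [Fintype n] [DecidableEq n]

theorem re_trace_sq_add_smul (X K : Matrix n n ℂ) (t : ℝ) :
    ((X + t • K) ^ 2).trace.re
      = (X ^ 2).trace.re + t * (2 * (X * K).trace.re) + t ^ 2 * (K ^ 2).trace.re := by
  have hexp : (X + t • K) ^ 2 = X ^ 2 + t • (X * K) + t • (K * X) + (t ^ 2) • (K ^ 2) := by
    simp only [sq, add_mul, mul_add, smul_add, mul_smul_comm, smul_mul_assoc, smul_smul]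
    abel
  simp only [hexp, trace_add, trace_smul, trace_mul_comm K X, Complex.add_re, Complex.smul_re,
    smul_eq_mul]
  ring

theorem matPow_isHermitian (A : Matrix n n ℂ) (t : ℝ) : (matPow A t).IsHermitian :=
  cfc_predicate (fun x : ℝ => x ^ t) A

variable {A : Matrix n n ℂ}

theorem Matrix.PosDef.pos_of_mem_spectrum (hA : A.PosDef) {x : ℝ} (hx : x ∈ spectrum ℝ A) :
    0 < x := by
  obtain ⟨i, rfl⟩ := hA.isHermitian.spectrum_real_eq_range_eigenvalues ▸ hx
  exact hA.eigenvalues_pos i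

theorem matPow_mul_matPow (hA : A.PosDef) (s t : ℝ) :
    matPow A s * matPow A t = matPow A (s + t) := by
  have hcont (u : ℝ) : ContinuousOn (fun x : ℝ => x ^ u) (spectrum ℝ A) := fun x hx =>
    (Real.continuousAt_rpow_const x u (.inl (hA.pos_of_mem_spectrum hx).ne')).continuousWithinAt
  rw [matPow, matPow, matPow, ← cfc_mul _ _ A (hcont s) (hcont t)]
  exact cfc_congr fun x hx => (Real.rpow_add (hA.pos_of_mem_spectrum hx) s t).symm

theorem matPow_zero (hA : A.PosDef) : matPow A 0 = 1 := by
  rw [matPow, cfc_congr (g := 1) fun x _ => Real.rpow_zero x]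
  exact cfc_one ℝ A hA.isHermitian

theorem matPow_mul_matPow_neg (hA : A.PosDef) (t : ℝ) : matPow A t * matPow A (-t) = 1 := by
  rw [matPow_mul_matPow hA, add_neg_cancel, matPow_zero hA]

theorem matPow_neg_mul_matPow (hA : A.PosDef) (t : ℝ) : matPow A (-t) * matPow A t = 1 := by
  rw [matPow_mul_matPow hA, neg_add_cancel, matPow_zero hA]

theorem matPow_mul_conj_matPow_neg (hA : A.PosDef) (t : ℝ) (B : Matrix n n ℂ) :
    matPow A t * (matPow A (-t) * B * matPow A (-t)) * matPow A t = B := by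
  simp only [← mul_assoc, matPow_mul_matPow_neg hA, one_mul]
  rw [mul_assoc, matPow_neg_mul_matPow hA, mul_one]

theorem isUnit_matPow (hA : A.PosDef) (t : ℝ) : IsUnit (matPow A t) :=
  ⟨⟨_, _, matPow_mul_matPow_neg hA t, matPow_neg_mul_matPow hA t⟩, rfl⟩

end MatPow

section SandwichedQuasi

variable {n : Type*} [Fintype n] [DecidableEq n]

noncomputable def sandwichedQuasiTwo (ρ σ : Matrix n n ℂ) : ℝ :=
  (((matPow σ (-(1/4)) * ρ * matPow σ (-(1/4))) ^ 2).trace).re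

theorem sandwichedRenyiTwo_eq_log (ρ σ : Matrix n n ℂ) :
    sandwichedRenyiTwo ρ σ = Real.log (sandwichedQuasiTwo ρ σ) := rfl

theorem sandwichedQuasiTwo_pos [Nonempty n] {ρ σ : Matrix n n ℂ} (hρ : ρ.PosDef)
    (hσ : σ.PosDef) : 0 < sandwichedQuasiTwo ρ σ := by
  rw [sandwichedQuasiTwo, sq]
  exact ((matPow_isHermitian σ _).conj hρ.isHermitian).re_trace_mul_self_pos
    (((isUnit_matPow hσ _).mul hρ.isUnit).mul (isUnit_matPow hσ _)).ne_zero

theorem sandwichedQuasiTwo_add_smul {σ : Matrix n n ℂ} (hσ : σ.PosDef) (ρ M : Matrix n n ℂ)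
    (t : ℝ) :
    sandwichedQuasiTwo (ρ + t • M) σ = sandwichedQuasiTwo ρ σ
      + t * (2 * (matPow σ (-(1/2)) * ρ * matPow σ (-(1/2)) * M).trace.re)
      + t ^ 2 * sandwichedQuasiTwo M σ := by
  rw [sandwichedQuasiTwo, mul_add, add_mul, mul_smul_comm, smul_mul_assoc, re_trace_sq_add_smul,
    trace_conj_mul_conj, matPow_mul_matPow hσ]
  norm_num [sandwichedQuasiTwo]

theorem re_trace_trace_adjoint_mul_eq_of_sandwichedQuasiTwo_le
    {Λ : Matrix n n ℂ →ₗ[ℝ] Matrix n n ℂ} {Λstar : Matrix n n ℂ → Matrix n n ℂ}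
    (hadj : ∀ A B : Matrix n n ℂ, (Λstar A * B).trace = (A * Λ B).trace)
    {ρ σ : Matrix n n ℂ} (hσ : σ.PosDef) (hΛσ : (Λ σ).PosDef) (M : Matrix n n ℂ)
    (hle : ∀ᶠ t in 𝓝 (0 : ℝ),
      sandwichedQuasiTwo (Λ (ρ + t • M)) (Λ σ) ≤ sandwichedQuasiTwo (ρ + t • M) σ)
    (heq : sandwichedQuasiTwo (Λ ρ) (Λ σ) = sandwichedQuasiTwo ρ σ) :
    (Λstar (matPow (Λ σ) (-(1/2)) * Λ ρ * matPow (Λ σ) (-(1/2))) * M).trace.re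
      = (matPow σ (-(1/2)) * ρ * matPow σ (-(1/2)) * M).trace.re := by
  simp only [map_add, map_smul, sandwichedQuasiTwo_add_smul hσ, sandwichedQuasiTwo_add_smul hΛσ,
    heq] at hle
  have hmin : IsLocalMin (fun t : ℝ =>
      (2 * (matPow σ (-(1/2)) * ρ * matPow σ (-(1/2)) * M).trace.re
        - 2 * (matPow (Λ σ) (-(1/2)) * Λ ρ * matPow (Λ σ) (-(1/2)) * Λ M).trace.re) * t
      + (sandwichedQuasiTwo M σ - sandwichedQuasiTwo (Λ M) (Λ σ)) * t ^ 2) 0 := by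
    filter_upwards [hle] with t ht
    linarith
  rw [hadj]
  linarith [eq_zero_of_isLocalMin_mul_add_mul_sq hmin]

end SandwichedQuasi

/-- Saturation of the data processing inequality for the sandwiched
2-Rényi relative entropy (holding in a neighborhood) implies that the Petz map recovers `ρ`:
`σ^{1/2} Λ*(Λ(σ)^{−1/2} Λ(ρ) Λ(σ)^{−1/2}) σ^{1/2} = ρ`. -/
theorem petz_recovery_of_renyiTwo_dpi_saturation
    {n : Type*} [Fintype n] [DecidableEq n] [Nonempty n]
    (Λ Λstar : Matrix n n ℂ →ₗ[ℝ] Matrix n n ℂ)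
    (hΛherm : ∀ A : Matrix n n ℂ, A.IsHermitian → (Λ A).IsHermitian)
    (hadj : ∀ A B : Matrix n n ℂ, (Λstar A * B).trace = (A * Λ B).trace)
    (ρ σ : Matrix n n ℂ) (hρ : ρ.PosDef) (hσ : σ.PosDef)
    (hΛρ : (Λ ρ).PosDef) (hΛσ : (Λ σ).PosDef)
    (hDPI : ∃ ε > 0, ∀ M₁ M₂ : Matrix n n ℂ, M₁.IsHermitian → M₂.IsHermitian →
      ‖M₁‖ < ε → ‖M₂‖ < ε →
      (ρ + M₁).PosDef ∧ (σ + M₂).PosDef ∧ (Λ (ρ + M₁)).PosDef ∧ (Λ (σ + M₂)).PosDef ∧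
      sandwichedRenyiTwo (ρ + M₁) (σ + M₂)
        ≥ sandwichedRenyiTwo (Λ (ρ + M₁)) (Λ (σ + M₂)))
    (hsat : sandwichedRenyiTwo ρ σ = sandwichedRenyiTwo (Λ ρ) (Λ σ)) :
    matPow σ (1/2)
      * Λstar (matPow (Λ σ) (-(1/2)) * Λ ρ * matPow (Λ σ) (-(1/2)))
      * matPow σ (1/2) = ρ := by
  obtain ⟨ε, hε, hD⟩ := hDPI
  have hle (M : Matrix n n ℂ) (hM : M.IsHermitian) : ∀ᶠ t in 𝓝 (0 : ℝ),
      sandwichedQuasiTwo (Λ (ρ + t • M)) (Λ σ) ≤ sandwichedQuasiTwo (ρ + t • M) σ := by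
    have hsmall : ∀ᶠ t in 𝓝 (0 : ℝ), ‖t • M‖ < ε :=
      (continuous_id.smul continuous_const).norm.tendsto' 0 0 (by simp) |>.eventually_lt_const hε
    filter_upwards [hsmall] with t ht
    obtain ⟨hρt, -, hΛρt, -, hdpi⟩ :=
      hD (t • M) 0 (hM.smul (IsSelfAdjoint.all t)) isHermitian_zero ht (by simpa using hε)
    simp only [add_zero, sandwichedRenyiTwo_eq_log] at hdpi
    exact (Real.log_le_log_iff (sandwichedQuasiTwo_pos hΛρt hΛσ)
      (sandwichedQuasiTwo_pos hρt hσ)).mp hdpi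
  have heq : sandwichedQuasiTwo (Λ ρ) (Λ σ) = sandwichedQuasiTwo ρ σ :=
    Real.log_injOn_pos (sandwichedQuasiTwo_pos hΛρ hΛσ) (sandwichedQuasiTwo_pos hρ hσ) hsat.symm
  set Z := matPow (Λ σ) (-(1/2)) * Λ ρ * matPow (Λ σ) (-(1/2))
  set D := matPow σ (-(1/2)) * ρ * matPow σ (-(1/2)) - Λstar Z
  have hDherm : D.IsHermitian :=
    ((matPow_isHermitian σ _).conj hρ.isHermitian).sub (isHermitian_trace_adjoint_apply hΛherm hadj
      ((matPow_isHermitian (Λ σ) _).conj hΛρ.isHermitian))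
  have hD0 : D = 0 := by
    rw [← hDherm.re_trace_mul_self_eq_zero_iff, sub_mul, trace_sub, Complex.sub_re,
      re_trace_trace_adjoint_mul_eq_of_sandwichedQuasiTwo_le hadj hσ hΛσ D (hle D hDherm) heq,
      sub_self]
  rw [← sub_eq_zero.mp hD0]
  exact matPow_mul_conj_matPow_neg hσ (1/2) ρ
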